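/- There exists a graph G on vertex set ℤ (with some vertices of infinite degree) for which the independence ratio ᾱ(G) differs from limsup_{N→∞} ᾱ(G_N): namely, for G with edges {a,b} whenever a < 0 and b > −2a, one has ᾱ(G) ≤ 1/2 while limsup_{N→∞} ᾱ(G_N) ≥ 3/4. -/

import Mathlib

/-!
An independent set `S` cannot contain a negative `a` together with any `b > -2a`. So either
`S ⊆ [0, ∞)` or `S` is bounded above; in both cases `|S ∩ [-N, N]| ≤ N + O(1)`, and every
independent set has upper density at most `1/2`. On the other hand the window `[-2M, 2M]`
contains the independent set `[-2M, -M-1] ∪ [0, 2M]` of size `3M + 1`, because `-2a ≥ 2M + 2`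
for every `a ≤ -M - 1`; so `ᾱ(G_{2M}) ≥ (3M + 1)/(4M + 1) ≥ 3/4`.
-/

open Set Filter Topology

def adjZ (a b : ℤ) : Prop := (a < 0 ∧ b > -2 * a) ∨ (b < 0 ∧ a > -2 * b)

def IsIndepZ (S : Set ℤ) : Prop := ∀ a ∈ S, ∀ b ∈ S, ¬ adjZ a b

noncomputable def windowDensity (S : Set ℤ) (N : ℕ) : ℝ :=
  ((S ∩ Icc (-(N : ℤ)) N).ncard : ℝ) / ((Icc (-(N : ℤ)) N).ncard : ℝ)

noncomputable def windowIndepNumber (N : ℕ) : ℕ :=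
  sSup {k : ℕ | ∃ S ⊆ Icc (-(N : ℤ)) N, IsIndepZ S ∧ S.ncard = k}

lemma Int.ncard_Icc (a b : ℤ) : (Icc a b).ncard = (b + 1 - a).toNat := by
  rw [← Finset.coe_Icc, ncard_coe_finset, Int.card_Icc]

lemma ncard_Icc_neg_self (N : ℕ) : (Icc (-(N : ℤ)) N).ncard = 2 * N + 1 := by
  rw [Int.ncard_Icc]; omega

lemma tendsto_add_const_div_two_mul_add_one (c : ℝ) :
    Tendsto (fun N : ℕ => ((N : ℝ) + c) / (2 * N + 1)) atTop (𝓝 (1 / 2)) := by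
  have hlim : Tendsto (fun N : ℕ => (1 + c / N) / (2 + 1 / N)) atTop (𝓝 ((1 + 0) / (2 + 0))) :=
    (tendsto_const_nhds.add (tendsto_const_div_atTop_nhds_zero_nat c)).div
      (tendsto_const_nhds.add (tendsto_const_div_atTop_nhds_zero_nat 1)) (by norm_num)
  norm_num at hlim
  refine hlim.congr' ?_
  filter_upwards [eventually_ne_atTop 0] with N hN
  field_simp

namespace IsIndepZ

variable {S : Set ℤ}

lemma subset_Ici_zero_or_bddAbove (hS : IsIndepZ S) : S ⊆ Ici 0 ∨ ∃ C : ℕ, S ⊆ Iic (C : ℤ) := by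
  by_cases hneg : ∃ a ∈ S, a < 0
  · obtain ⟨a, haS, ha⟩ := hneg
    refine Or.inr ⟨(-2 * a).toNat, fun b hbS => ?_⟩
    have hb : ¬ b > -2 * a := fun hb => hS a haS b hbS (Or.inl ⟨ha, hb⟩)
    simp only [mem_Iic]
    omega
  · exact Or.inl fun b hb => le_of_not_gt fun h => hneg ⟨b, hb, h⟩

lemma exists_ncard_inter_Icc_le (hS : IsIndepZ S) :
    ∃ C : ℕ, ∀ N : ℕ, (S ∩ Icc (-(N : ℤ)) N).ncard ≤ N + C + 1 := by
  rcases hS.subset_Ici_zero_or_bddAbove with hnonneg | ⟨C, hC⟩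
  · refine ⟨0, fun N => ?_⟩
    have hsub : S ∩ Icc (-(N : ℤ)) N ⊆ Icc 0 N := fun b ⟨hbS, _, hbN⟩ => ⟨hnonneg hbS, hbN⟩
    have := ncard_le_ncard hsub (finite_Icc _ _)
    rw [Int.ncard_Icc] at this
    omega
  · refine ⟨C, fun N => ?_⟩
    have hsub : S ∩ Icc (-(N : ℤ)) N ⊆ Icc (-(N : ℤ)) C :=
      fun b ⟨hbS, hbN, _⟩ => ⟨hbN, hC hbS⟩
    have := ncard_le_ncard hsub (finite_Icc _ _)
    rw [Int.ncard_Icc] at this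
    omega

lemma limsup_windowDensity_le_half (hS : IsIndepZ S) :
    limsup (windowDensity S) atTop ≤ 1 / 2 := by
  obtain ⟨C, hC⟩ := hS.exists_ncard_inter_Icc_le
  have hlim := tendsto_add_const_div_two_mul_add_one ((C : ℝ) + 1)
  have hle : ∀ N, windowDensity S N ≤ ((N : ℝ) + (C + 1)) / (2 * N + 1) := fun N => by
    rw [windowDensity, ncard_Icc_neg_self]
    push_cast
    gcongr
    rw [← add_assoc]
    exact_mod_cast hC N
  calc limsup (windowDensity S) atTop
      ≤ limsup (fun N : ℕ => ((N : ℝ) + (C + 1)) / (2 * N + 1)) atTop :=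
        limsup_le_limsup (Eventually.of_forall hle)
          (isBoundedUnder_of ⟨0, fun N => by unfold windowDensity; positivity⟩).isCoboundedUnder_le
          hlim.isBoundedUnder_le
    _ = 1 / 2 := hlim.limsup_eq

end IsIndepZ

lemma IsIndepZ.ncard_le_windowIndepNumber {N : ℕ} {S : Set ℤ} (hS : IsIndepZ S)
    (hsub : S ⊆ Icc (-(N : ℤ)) N) : S.ncard ≤ windowIndepNumber N := by
  refine le_csSup ⟨2 * N + 1, ?_⟩ ⟨S, hsub, hS, rfl⟩
  rintro k ⟨T, hT, -, rfl⟩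
  simpa only [ncard_Icc_neg_self] using ncard_le_ncard hT (finite_Icc _ _)

lemma windowIndepNumber_le (N : ℕ) : windowIndepNumber N ≤ 2 * N + 1 := by
  refine csSup_le ⟨0, ∅, empty_subset _, fun a ha => ha.elim, ncard_empty _⟩ ?_
  rintro k ⟨T, hT, -, rfl⟩
  simpa only [ncard_Icc_neg_self] using ncard_le_ncard hT (finite_Icc _ _)

lemma isIndepZ_Icc_union_Icc (M : ℕ) :
    IsIndepZ (Icc (-(2 * M : ℤ)) (-M - 1) ∪ Icc 0 (2 * M)) := by
  rintro a ha b hb (⟨h₁, h₂⟩ | ⟨h₁, h₂⟩) <;>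
    rcases ha with ⟨ha₁, ha₂⟩ | ⟨ha₁, ha₂⟩ <;> rcases hb with ⟨hb₁, hb₂⟩ | ⟨hb₁, hb₂⟩ <;> omega

lemma three_mul_add_one_le_windowIndepNumber (M : ℕ) :
    3 * M + 1 ≤ windowIndepNumber (2 * M) := by
  have hdisj : Disjoint (Icc (-(2 * M : ℤ)) (-M - 1)) (Icc 0 (2 * M)) :=
    disjoint_left.2 fun x hx hx' => by simp only [mem_Icc] at hx hx'; omega
  have hcard : (Icc (-(2 * M : ℤ)) (-M - 1) ∪ Icc 0 (2 * M)).ncard = 3 * M + 1 := by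
    rw [ncard_union_eq hdisj (finite_Icc _ _) (finite_Icc _ _), Int.ncard_Icc, Int.ncard_Icc]
    omega
  rw [← hcard]
  refine (isIndepZ_Icc_union_Icc M).ncard_le_windowIndepNumber ?_
  rintro x (⟨h₁, h₂⟩ | ⟨h₁, h₂⟩) <;> constructor <;> push_cast <;> omega

lemma three_quarters_le_limsup_windowIndepNumber_div :
    3 / 4 ≤ limsup (fun N : ℕ => (windowIndepNumber N : ℝ) / (Icc (-(N : ℤ)) N).ncard) atTop := by
  have hbdd : ∀ N : ℕ, (windowIndepNumber N : ℝ) / (Icc (-(N : ℤ)) N).ncard ≤ 1 := fun N => by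
    rw [ncard_Icc_neg_self, div_le_one (by positivity)]
    exact_mod_cast windowIndepNumber_le N
  refine le_limsup_of_frequently_le (frequently_atTop.2 fun N₀ => ⟨2 * N₀, by omega, ?_⟩)
    (isBoundedUnder_of ⟨1, hbdd⟩)
  have h := three_mul_add_one_le_windowIndepNumber N₀
  rw [ncard_Icc_neg_self, le_div_iff₀ (by positivity)]
  have h' : (3 * N₀ + 1 : ℝ) ≤ windowIndepNumber (2 * N₀) := by exact_mod_cast h
  push_cast
  linarith

theorem counterexample_infinite_degree :
    sSup {d : ℝ | ∃ S : Set ℤ, (∀ a ∈ S, ∀ b ∈ S, ¬ adjZ a b) ∧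
        d = Filter.limsup (fun N : ℕ =>
          ((S ∩ Set.Icc (-(N : ℤ)) (N : ℤ)).ncard : ℝ)
            / ((Set.Icc (-(N : ℤ)) (N : ℤ)).ncard : ℝ)) Filter.atTop} ≤ 1 / 2
    ∧ 3 / 4 ≤ Filter.limsup (fun N : ℕ =>
        ((sSup {k : ℕ | ∃ S ⊆ Set.Icc (-(N : ℤ)) (N : ℤ),
            (∀ a ∈ S, ∀ b ∈ S, ¬ adjZ a b) ∧ S.ncard = k} : ℕ) : ℝ)
          / ((Set.Icc (-(N : ℤ)) (N : ℤ)).ncard : ℝ)) Filter.atTop := by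
  refine ⟨Real.sSup_le ?_ (by norm_num), three_quarters_le_limsup_windowIndepNumber_div⟩
  rintro d ⟨S, hS, rfl⟩
  exact IsIndepZ.limsup_windowDensity_le_half hS
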